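/- arXiv:1305.0470 — 3 statements merged into one kernel-verified Lean document; each statement's English description precedes it below -/
import Mathlib

section
/- Let n ≥ 3 and let u be a choreography in X⁽ⁿ⁾ with symmetry group G ≤ Γ × Ŝ¹. Then every element of ker ρ and every element of ker σ has non-time-reversing τ-component (i.e. τ(ker ρ) ⊆ S¹ and τ(ker σ) ⊆ S¹), and every element of ker τ has ρ-component in SO(2) (i.e. ρ(ker τ) ⊆ SO(2)). Consequently τ restricts to injective homomorphisms ker ρ → S¹ and ker σ → S¹, and ρ restricts to an injective homomorphism ker τ → SO(2); in particular, when G is finite, the groups ker ρ, ker σ and ker τ are cyclic. -/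
noncomputable section

open Complex

/-- The time circle `𝕋 = ℝ/ℤ`. -/
abbrev TimeCircle : Type := AddCircle (1 : ℝ)

/-- The group `Ŝ¹` of rotations and reflections of the time circle: the element
`⟨θ, false⟩` is the rotation `t ↦ θ + t` and `⟨θ, true⟩` is the reflection `t ↦ θ - t`. -/
@[ext] structure TimeSym : Type where
  shift : TimeCircle
  rev : Bool

namespace TimeSym

/-- The action of an element of `Ŝ¹` on the time circle. -/
def act (g : TimeSym) (t : TimeCircle) : TimeCircle :=
  g.shift + (if g.rev then -t else t)

instance : One TimeSym := ⟨⟨0, false⟩⟩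
instance : Mul TimeSym :=
  ⟨fun g h => ⟨g.shift + (if g.rev then -h.shift else h.shift), xor g.rev h.rev⟩⟩
instance : Inv TimeSym := ⟨fun g => ⟨if g.rev then g.shift else -g.shift, g.rev⟩⟩

@[simp] lemma one_shift : (1 : TimeSym).shift = 0 := rfl
@[simp] lemma one_rev : (1 : TimeSym).rev = false := rfl
@[simp] lemma mul_shift (g h : TimeSym) :
    (g * h).shift = g.shift + (if g.rev then -h.shift else h.shift) := rfl
@[simp] lemma mul_rev (g h : TimeSym) : (g * h).rev = xor g.rev h.rev := rfl
@[simp] lemma inv_shift (g : TimeSym) :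
    g⁻¹.shift = if g.rev then g.shift else -g.shift := rfl
@[simp] lemma inv_rev (g : TimeSym) : g⁻¹.rev = g.rev := rfl

instance : Group TimeSym where
  mul_assoc a b c := by
    obtain ⟨sa, ra⟩ := a; obtain ⟨sb, rb⟩ := b; obtain ⟨sc, rc⟩ := c
    ext
    · simp only [mul_shift, mul_rev]
      cases ra <;> cases rb <;> simp <;> abel
    · simp [Bool.xor_assoc]
  one_mul a := by ext <;> simp
  mul_one a := by obtain ⟨sa, ra⟩ := a; ext <;> cases ra <;> simp
  inv_mul_cancel a := by obtain ⟨sa, ra⟩ := a; ext <;> cases ra <;> simp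

@[simp] lemma act_one (t : TimeCircle) : (1 : TimeSym).act t = t := by simp [act]

@[simp] lemma act_mul (g h : TimeSym) (t : TimeCircle) :
    (g * h).act t = g.act (h.act t) := by
  obtain ⟨sg, rg⟩ := g; obtain ⟨sh, rh⟩ := h
  simp only [act, mul_shift, mul_rev]
  cases rg <;> cases rh <;> simp <;> abel

/-- The rotation `t ↦ θ + t` of the time circle, as an element of `Ŝ¹`. -/
def trot (θ : ℝ) : TimeSym := ⟨(θ : TimeCircle), false⟩

/-- The reflection `t ↦ θ - t` of the time circle, as an element of `Ŝ¹`. -/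
def tref (θ : ℝ) : TimeSym := ⟨(θ : TimeCircle), true⟩

end TimeSym

/-- The orthogonal group `O(2)`, realised as the group of `ℝ`-linear isometries of `ℂ`. -/
abbrev O2 : Type := ℂ ≃ₗᵢ[ℝ] ℂ

/-- `A ∈ SO(2)`: `A` is a rotation, i.e. acts as multiplication by a unit complex number. -/
def IsRotO (A : O2) : Prop := ∀ z : ℂ, A z = A 1 * z

/-- Rotation of the plane through the angle `2πa`, as an element of `O(2)`. -/
def rotO (a : ℝ) : O2 := rotation (Circle.exp (2 * Real.pi * a))

/-- The full symmetry group `Γ × Ŝ¹ = O(2) × Sₙ × Ŝ¹` acting on loops in configuration space. -/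
abbrev FullG (n : ℕ) : Type := (O2 × Equiv.Perm (Fin n)) × TimeSym

/-- The element `g = (A, σ, τ)` of `Γ × Ŝ¹` fixes the loop `u` in configuration space. -/
def Fixes {n : ℕ} (g : FullG n) (u : TimeCircle → Fin n → ℂ) : Prop :=
  ∀ (t : TimeCircle) (j : Fin n), u (g.2.act t) j = g.1.1 (u t (g.1.2⁻¹ j))

/-- The symmetry group of a loop `u`: its stabilizer in `Γ × Ŝ¹`. -/
def symmGroup (n : ℕ) (u : TimeCircle → Fin n → ℂ) : Subgroup (FullG n) where
  carrier := {g | Fixes g u}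
  one_mem' := by
    intro t j
    simp [Fixes]
  mul_mem' := by
    intro a b ha hb t j
    have h1 := ha (b.2.act t) j
    have h2 := hb t (a.1.2⁻¹ j)
    simp only [Fixes] at *
    simp only [Prod.fst_mul, Prod.snd_mul, TimeSym.act_mul]
    rw [h1, h2]
    simp [mul_inv_rev]
  inv_mem' := by
    intro a ha
    have key : ∀ (t : TimeCircle) (j : Fin n),
        a.1.1⁻¹ (u t (a.1.2 j)) = u (a.2⁻¹.act t) j := by
      intro t j
      have h := ha (a.2⁻¹.act t) (a.1.2 j)
      rw [← TimeSym.act_mul, mul_inv_cancel, TimeSym.act_one] at h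
      rw [Equiv.Perm.inv_def, Equiv.symm_apply_apply] at h
      rw [h, LinearIsometryEquiv.coe_inv, LinearIsometryEquiv.symm_apply_apply]
    intro t j
    show u ((a⁻¹).2.act t) j = (a⁻¹).1.1 (u t ((a⁻¹).1.2⁻¹ j))
    simp only [Prod.fst_inv, Prod.snd_inv, inv_inv]
    exact (key t j).symm

variable {n : ℕ}

/-- The basic cyclic permutation `σ₁ : j ↦ j + 1`. -/
def sigma1 (n : ℕ) [NeZero n] : Equiv.Perm (Fin n) := Equiv.addLeft 1

/-- The permutation `s₁ : j ↦ -j` (in `1`-indexed notation, `j ↦ 2 - j`). -/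
def sOne (n : ℕ) [NeZero n] : Equiv.Perm (Fin n) := Equiv.neg (Fin n)

/-- The choreography element `𝔠 = (I, σ₁, -1/n)`. -/
def chorEl (n : ℕ) [NeZero n] : FullG n := ((1, sigma1 n), TimeSym.trot (-(1 / n)))

/-- Projection `ρ : Γ × Ŝ¹ → O(2)`. -/
def rhoHom (n : ℕ) : FullG n →* O2 :=
  (MonoidHom.fst _ _).comp (MonoidHom.fst _ _)

/-- Projection `σ : Γ × Ŝ¹ → Sₙ`. -/
def sigHom (n : ℕ) : FullG n →* Equiv.Perm (Fin n) :=
  (MonoidHom.snd _ _).comp (MonoidHom.fst _ _)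

/-- Projection `τ : Γ × Ŝ¹ → Ŝ¹`. -/
def tauHom (n : ℕ) : FullG n →* TimeSym := MonoidHom.snd _ _

/-!
A time reversal has a fixed instant. At such an instant an element `(1, σ, τ)` forces `σ = 1`,
the positions being distinct, and an element `(A, 1, τ)` forces `A` to fix a nonzero vector, so
`A² = 1`. Composing with `𝔠` keeps `τ` reversing but multiplies `σ` by `σ₁`, which is absurd in
the first case, and in the second makes bodies `0` and `2` collide.

If `(A, σ, 1)` is a symmetry with `A` a reflection, conjugate `A` to complex conjugation. The path
`x` of body `0` satisfies `x (t + k/n) = A (x t)` with `k = σ 0`, so `2k ≡ 0 mod n`. If `k = 0` all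
bodies stay on the mirror line, where the coordinate along the line must repeat after a shift by
`1/n` (a discrete universal chord theorem), a collision. If `2k = n` the coordinate normal to the
line is antiperiodic, hence vanishes somewhere, again a collision.

An element with trivial `τ` and trivial `ρ` or `σ` is therefore the identity, which gives the
injectivity statements, and a finite group embedding in the circle group is cyclic.
-/

open ComplexConjugate

namespace TimeSym

lemma exists_act_eq_self (τ : TimeSym) (h : τ.rev = true) : ∃ t, τ.act t = t := by
  obtain ⟨x, hx⟩ := QuotientAddGroup.mk_surjective τ.shift
  refine ⟨((x / 2 : ℝ) : TimeCircle), ?_⟩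
  rw [act, h, if_pos rfl, ← hx, ← QuotientAddGroup.mk_neg, ← QuotientAddGroup.mk_add]
  ring_nf

lemma shift_mul_of_rev_eq_false {g : TimeSym} (hg : g.rev = false) (h : TimeSym) :
    (g * h).shift = g.shift + h.shift := by
  simp [hg]

end TimeSym

/-- The differences `f (t + 1/m) - f t` sum to zero over `t = i/m`, so they change sign. -/
theorem Continuous.exists_apply_add_one_div_eq {f : TimeCircle → ℝ} (hf : Continuous f)
    {m : ℕ} (hm : m ≠ 0) : ∃ t, f (t + ((1 / m : ℝ) : TimeCircle)) = f t := by
  set g : TimeCircle → ℝ := fun t => f (t + ((1 / m : ℝ) : TimeCircle)) - f t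
  have hg : Continuous g := by fun_prop
  have hsum : ∑ i ∈ Finset.range m, g ((i / m : ℝ) : TimeCircle) = 0 := by
    have hstep : ∀ i : ℕ, g ((i / m : ℝ) : TimeCircle)
        = f (((i + 1 : ℕ) / m : ℝ) : TimeCircle) - f ((i / m : ℝ) : TimeCircle) := by
      intro i
      simp only [g, ← QuotientAddGroup.mk_add]
      push_cast
      ring_nf
    simp only [hstep, Finset.sum_range_sub (fun i : ℕ => f ((i / m : ℝ) : TimeCircle)),
      div_self (Nat.cast_ne_zero.mpr hm : (m : ℝ) ≠ 0), Nat.cast_zero, zero_div,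
      QuotientAddGroup.mk_zero]
    rw [AddCircle.coe_period, sub_self]
  have hne : (Finset.range m).Nonempty := Finset.nonempty_range_iff.mpr hm
  obtain ⟨i, -, hi⟩ : ∃ i ∈ Finset.range m, g ((i / m : ℝ) : TimeCircle) ≤ 0 := by
    by_contra! h
    exact (Finset.sum_pos h hne).ne' hsum
  obtain ⟨j, -, hj⟩ : ∃ j ∈ Finset.range m, 0 ≤ g ((j / m : ℝ) : TimeCircle) := by
    by_contra! h
    exact (Finset.sum_neg h hne).ne hsum
  obtain ⟨t, ht⟩ := intermediate_value_univ _ _ hg ⟨hi, hj⟩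
  exact ⟨t, sub_eq_zero.mp ht⟩

namespace O2

lemma isRotO_or_exists_mul_apply_eq_conj (A : O2) :
    IsRotO A ∨ ∃ a : Circle, ∀ z, (a : ℂ) * A z = conj ((a : ℂ) * z) := by
  obtain ⟨c, rfl | rfl⟩ := linear_isometry_complex A
  · left
    intro z
    simp
  · right
    obtain ⟨θ, rfl⟩ := Circle.exp_surjective c
    refine ⟨Circle.exp (-(θ / 2)), fun z => ?_⟩
    have hconj : conj (Circle.exp (-(θ / 2)) : ℂ) = Circle.exp (-(θ / 2)) * Circle.exp θ := by
      rw [← Circle.coe_inv_eq_conj, ← Circle.coe_mul, ← Circle.exp_neg, ← Circle.exp_add]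
      ring_nf
    simp only [LinearIsometryEquiv.trans_apply, rotation_apply, conjLIE_apply]
    rw [map_mul, hconj, mul_assoc]

lemma _root_.IsRotO.eq_one_of_apply_eq_self {A : O2} (hA : IsRotO A) {z : ℂ} (hz : z ≠ 0)
    (hAz : A z = z) : A = 1 := by
  have hA1 : A 1 = 1 := mul_right_cancel₀ hz (by rw [← hA, hAz, one_mul])
  ext w
  rw [hA, hA1, one_mul]
  rfl

lemma apply_apply_eq_self_of_apply_eq_self (A : O2) {z : ℂ} (hz : z ≠ 0) (hAz : A z = z)
    (w : ℂ) : A (A w) = w := by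
  rcases A.isRotO_or_exists_mul_apply_eq_conj with hA | ⟨a, ha⟩
  · rw [hA.eq_one_of_apply_eq_self hz hAz]
    rfl
  · refine mul_left_cancel₀ (Circle.coe_ne_zero a) ?_
    rw [ha, ha, Complex.conj_conj]

end O2

lemma isCyclic_of_injOn_timeSym {G : Type*} [Group G] {K : Subgroup G} [Finite K]
    {f : G →* TimeSym} (hf : Set.InjOn f K) (hrev : ∀ k ∈ K, (f k).rev = false) :
    IsCyclic K :=
  isCyclic_of_injective_ringHom (R := ℂ)
    { toFun := fun k => AddCircle.toCircle (f k).shift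
      map_one' := by simp
      map_mul' := fun x y => by
        simp [TimeSym.shift_mul_of_rev_eq_false (hrev x x.2), AddCircle.toCircle_add] }
    fun x y hxy => Subtype.ext <| hf x.2 y.2 <| TimeSym.ext
      (AddCircle.injective_toCircle one_ne_zero (Circle.coe_injective hxy))
      ((hrev x x.2).trans (hrev y y.2).symm)

lemma isCyclic_of_injOn_O2 {G : Type*} [Group G] {K : Subgroup G} [Finite K]
    {f : G →* O2} (hf : Set.InjOn f K) (hrot : ∀ k ∈ K, IsRotO (f k)) : IsCyclic K :=
  isCyclic_of_injective_ringHom (R := ℂ)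
    { toFun := fun k => f k 1
      map_one' := by simp
      map_mul' := fun x y => by simp [hrot x x.2 (f y 1)] }
    fun x y hxy => Subtype.ext <| hf x.2 y.2 <| LinearIsometryEquiv.ext fun z => by
      simp only [MonoidHom.coe_mk, OneHom.coe_mk] at hxy
      rw [hrot x x.2, hrot y y.2, hxy]

instance Subgroup.finite_inf_left {G : Type*} [Group G] (H K : Subgroup G) [Finite H] :
    Finite ↥(H ⊓ K) :=
  Finite.of_injective _ (Subgroup.inclusion_injective inf_le_left)

section Choreography

variable {u : TimeCircle → Fin n → ℂ}

lemma perm_eq_one_of_rho_eq_one (hcoll : ∀ t, Function.Injective (u t)) {g : FullG n}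
    (hg : g ∈ symmGroup n u) (hA : g.1.1 = 1) {t : TimeCircle} (ht : g.2.act t = t) :
    g.1.2 = 1 := by
  refine inv_eq_one.mp (Equiv.ext fun j => (hcoll t ?_).symm)
  simpa [ht, hA] using hg t j

lemma eq_one_of_rho_eq_one_of_tau_eq_one (hcoll : ∀ t, Function.Injective (u t)) {g : FullG n}
    (hg : g ∈ symmGroup n u) (hA : g.1.1 = 1) (hτ : g.2 = 1) : g = 1 :=
  Prod.ext (Prod.ext hA (perm_eq_one_of_rho_eq_one hcoll hg hA (t := 0) (by simp [hτ]))) hτ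

lemma injOn_tau_inf_ker_rho (hcoll : ∀ t, Function.Injective (u t)) :
    Set.InjOn (tauHom n) (symmGroup n u ⊓ (rhoHom n).ker) :=
  (Set.injOn_iff_map_eq_one (tauHom n) (symmGroup n u ⊓ (rhoHom n).ker)).mpr fun _ hg hτ =>
    eq_one_of_rho_eq_one_of_tau_eq_one hcoll hg.1 hg.2 hτ

lemma injOn_rho_inf_ker_tau (hcoll : ∀ t, Function.Injective (u t)) :
    Set.InjOn (rhoHom n) (symmGroup n u ⊓ (tauHom n).ker) :=
  (Set.injOn_iff_map_eq_one (rhoHom n) (symmGroup n u ⊓ (tauHom n).ker)).mpr fun _ hg hA =>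
    eq_one_of_rho_eq_one_of_tau_eq_one hcoll hg.1 hA hg.2

variable [NeZero n]

open Fin.NatCast in
lemma apply_natCast_of_chorEl_mem (hchor : chorEl n ∈ symmGroup n u) (m : ℕ) (t : TimeCircle) :
    u t m = u (t + ((m / n : ℝ) : TimeCircle)) 0 := by
  induction m generalizing t with
  | zero => simp
  | succ m ih =>
    have h := hchor (t + ((1 / n : ℝ) : TimeCircle)) (m + 1)
    have hact : (chorEl n).2.act (t + ((1 / n : ℝ) : TimeCircle)) = t := by
      simp [chorEl, TimeSym.trot, TimeSym.act]
    have hperm : (chorEl n).1.2⁻¹ ((m : Fin n) + 1) = m := by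
      simp [chorEl, sigma1]
    rw [hact, hperm, ih] at h
    rw [Nat.cast_succ, h, add_assoc, ← QuotientAddGroup.mk_add]
    show u _ 0 = u _ 0
    congr 3
    push_cast
    ring

open Fin.NatCast in
lemma dvd_of_apply_add_eq_of_chorEl_mem (hcoll : ∀ t, Function.Injective (u t))
    (hchor : chorEl n ∈ symmGroup n u) {t : TimeCircle} {m : ℕ}
    (h : u (t + ((m / n : ℝ) : TimeCircle)) 0 = u t 0) : n ∣ m := by
  rw [← apply_natCast_of_chorEl_mem hchor] at h
  exact Fin.natCast_eq_zero.mp (hcoll t h)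

lemma rev_eq_false_of_rho_eq_one (hn : 2 ≤ n) (hcoll : ∀ t, Function.Injective (u t))
    (hchor : chorEl n ∈ symmGroup n u) {g : FullG n} (hg : g ∈ symmGroup n u)
    (hA : g.1.1 = 1) : g.2.rev = false := by
  by_contra hrev
  rw [Bool.not_eq_false] at hrev
  obtain ⟨t₀, ht₀⟩ := g.2.exists_act_eq_self hrev
  obtain ⟨t₁, ht₁⟩ := (g * chorEl n).2.exists_act_eq_self (by simp [chorEl, TimeSym.trot, hrev])
  have hσ := perm_eq_one_of_rho_eq_one hcoll hg hA ht₀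
  have hσc := perm_eq_one_of_rho_eq_one hcoll ((symmGroup n u).mul_mem hg hchor)
    (by simp [chorEl, hA]) ht₁
  have h1 : (1 : Fin n) ≠ 0 := by simp [Fin.ext_iff, Nat.mod_eq_of_lt (show 1 < n by omega)]
  exact h1 (by simpa [chorEl, sigma1, hσ] using congrArg (· 0) hσc)

lemma rev_eq_false_of_sig_eq_one (hn : 3 ≤ n) (hcoll : ∀ t, Function.Injective (u t))
    (hchor : chorEl n ∈ symmGroup n u) {g : FullG n} (hg : g ∈ symmGroup n u)
    (hσ : g.1.2 = 1) : g.2.rev = false := by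
  by_contra hrev
  rw [Bool.not_eq_false] at hrev
  obtain ⟨t₀, ht₀⟩ := g.2.exists_act_eq_self hrev
  obtain ⟨t₁, ht₁⟩ := (g * chorEl n).2.exists_act_eq_self (by simp [chorEl, TimeSym.trot, hrev])
  have : Nontrivial (Fin n) := Fin.nontrivial_iff_two_le.mpr (by omega)
  obtain ⟨j, hj⟩ := (hcoll t₀).exists_ne 0
  have hinvol := g.1.1.apply_apply_eq_self_of_apply_eq_self hj
    (by simpa [ht₀, hσ] using (hg t₀ j).symm)
  have hstep : ∀ i, u t₁ (i + 1) = g.1.1 (u t₁ i) := fun i => by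
    have h := (symmGroup n u).mul_mem hg hchor t₁ (i + 1)
    rw [ht₁] at h
    simpa [hσ, chorEl, sigma1] using h
  have h20 : u t₁ (1 + 1) = u t₁ 0 := by
    rw [hstep, ← zero_add (1 : Fin n), hstep, hinvol]
  have h2 : (1 + 1 : Fin n) ≠ 0 := by
    simp [Fin.ext_iff, Fin.val_add, Nat.mod_eq_of_lt (show 1 < n by omega),
      Nat.mod_eq_of_lt (show 2 < n by omega)]
  exact h2 (hcoll t₁ h20)

open Fin.NatCast in
lemma isRotO_of_tau_eq_one (hn : 2 ≤ n) (hu : Continuous u)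
    (hcoll : ∀ t, Function.Injective (u t)) (hchor : chorEl n ∈ symmGroup n u) {g : FullG n}
    (hg : g ∈ symmGroup n u) (hτ : g.2 = 1) : IsRotO g.1.1 := by
  rcases g.1.1.isRotO_or_exists_mul_apply_eq_conj with hrot | ⟨a, ha⟩
  · exact hrot
  exfalso
  set k : ℕ := (g.1.2 0).val
  set y : TimeCircle → ℂ := fun t => a * u t 0
  have hy : Continuous y := continuous_const.mul ((continuous_apply 0).comp hu)
  have hyk : ∀ t, y (t + ((k / n : ℝ) : TimeCircle)) = conj (y t) := by
    intro t
    have h := hg t (g.1.2 0)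
    rw [hτ, TimeSym.act_one, Equiv.Perm.inv_def,
      Equiv.symm_apply_apply, ← Fin.cast_val_eq_self (g.1.2 0),
      apply_natCast_of_chorEl_mem hchor] at h
    exact (congrArg _ h).trans (ha _)
  have hdvd : ∀ {t : TimeCircle} {m : ℕ}, y (t + ((m / n : ℝ) : TimeCircle)) = y t → n ∣ m :=
    fun h => dvd_of_apply_add_eq_of_chorEl_mem hcoll hchor
      (mul_left_cancel₀ (Circle.coe_ne_zero a) h)
  have hkn : k < n := (g.1.2 0).isLt
  have hk : k = 0 ∨ 2 * k = n := by
    obtain ⟨q, hq⟩ : n ∣ 2 * k := hdvd (t := 0) (by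
      rw [zero_add, Nat.cast_mul, Nat.cast_two, two_mul, add_div, QuotientAddGroup.mk_add, hyk,
        ← zero_add ((k / n : ℝ) : TimeCircle), hyk, Complex.conj_conj])
    have : q < 2 := by nlinarith
    interval_cases q <;> omega
  rcases hk with hk | hk
  · obtain ⟨t, ht⟩ := (Complex.continuous_re.comp hy).exists_apply_add_one_div_eq (NeZero.ne n)
    have hreal : ∀ s, (y s).im = 0 := fun s => by
      simpa [hk, Complex.conj_eq_iff_im] using (hyk s).symm
    have h1 : n ∣ 1 := hdvd (t := t) (Complex.ext (by simpa using ht) (by rw [hreal, hreal]))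
    exact absurd (Nat.le_of_dvd one_pos h1) (by omega)
  · obtain ⟨t, ht⟩ := (Complex.continuous_im.comp hy).exists_apply_add_one_div_eq two_ne_zero
    have hhalf : (k / n : ℝ) = 1 / 2 := by
      rw [div_eq_div_iff (by positivity) two_ne_zero, ← hk]
      push_cast
      ring
    rw [Nat.cast_two, ← hhalf, Function.comp_apply, Function.comp_apply, hyk,
      Complex.conj_im] at ht
    have hk' : n ∣ k := hdvd (t := t) (by rw [hyk, Complex.conj_eq_iff_im]; linarith)
    exact absurd (Nat.le_of_dvd (by omega) hk') (by omega)

lemma injOn_tau_inf_ker_sig (hn : 2 ≤ n) (hu : Continuous u)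
    (hcoll : ∀ t, Function.Injective (u t)) (hchor : chorEl n ∈ symmGroup n u) :
    Set.InjOn (tauHom n) (symmGroup n u ⊓ (sigHom n).ker) := by
  refine (Set.injOn_iff_map_eq_one (tauHom n) (symmGroup n u ⊓ (sigHom n).ker)).mpr
    fun g hgσ hτ => ?_
  obtain ⟨hg, hσ⟩ : g ∈ symmGroup n u ∧ g.1.2 = 1 := hgσ
  change g.2 = 1 at hτ
  have : Nontrivial (Fin n) := Fin.nontrivial_iff_two_le.mpr hn
  obtain ⟨j, hj⟩ := (hcoll 0).exists_ne 0
  have hA : g.1.1 = 1 := (isRotO_of_tau_eq_one hn hu hcoll hchor hg hτ).eq_one_of_apply_eq_self hj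
    (by simpa [hτ, hσ] using (hg 0 j).symm)
  exact eq_one_of_rho_eq_one_of_tau_eq_one hcoll hg hA hτ

end Choreography

theorem statement_1_general (n : ℕ) (hn : 3 ≤ n) [NeZero n]
    (u : TimeCircle → Fin n → ℂ) (hu : Continuous u)
    (hcoll : ∀ t, Function.Injective (u t))
    (hchor : chorEl n ∈ symmGroup n u) :
    (∀ g ∈ symmGroup n u, g.1.1 = 1 → g.2.rev = false) ∧
    (∀ g ∈ symmGroup n u, g.1.2 = 1 → g.2.rev = false) ∧
    (∀ g ∈ symmGroup n u, g.2 = 1 → IsRotO g.1.1) ∧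
    (∀ g ∈ symmGroup n u, ∀ h ∈ symmGroup n u,
      g.1.1 = 1 → h.1.1 = 1 → g.2 = h.2 → g = h) ∧
    (∀ g ∈ symmGroup n u, ∀ h ∈ symmGroup n u,
      g.1.2 = 1 → h.1.2 = 1 → g.2 = h.2 → g = h) ∧
    (∀ g ∈ symmGroup n u, ∀ h ∈ symmGroup n u,
      g.2 = 1 → h.2 = 1 → g.1.1 = h.1.1 → g = h) ∧
    (Finite ↥(symmGroup n u) →
      IsCyclic ↥(symmGroup n u ⊓ (rhoHom n).ker) ∧
      IsCyclic ↥(symmGroup n u ⊓ (sigHom n).ker) ∧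
      IsCyclic ↥(symmGroup n u ⊓ (tauHom n).ker)) := by
  have hn₂ : 2 ≤ n := by omega
  have hρ := fun g (hg : g ∈ symmGroup n u) => rev_eq_false_of_rho_eq_one hn₂ hcoll hchor hg
  have hσ := fun g (hg : g ∈ symmGroup n u) => rev_eq_false_of_sig_eq_one hn hcoll hchor hg
  have hτ := fun g (hg : g ∈ symmGroup n u) => isRotO_of_tau_eq_one hn₂ hu hcoll hchor hg
  have injρ := injOn_tau_inf_ker_rho hcoll
  have injσ := injOn_tau_inf_ker_sig hn₂ hu hcoll hchor
  have injτ := injOn_rho_inf_ker_tau hcoll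
  refine ⟨hρ, hσ, hτ, fun g hg h hh hg' hh' => injρ ⟨hg, hg'⟩ ⟨hh, hh'⟩,
    fun g hg h hh hg' hh' => injσ ⟨hg, hg'⟩ ⟨hh, hh'⟩,
    fun g hg h hh hg' hh' => injτ ⟨hg, hg'⟩ ⟨hh, hh'⟩, fun _ => ⟨?_, ?_, ?_⟩⟩
  · exact isCyclic_of_injOn_timeSym injρ fun g ⟨hg, hA⟩ => hρ g hg hA
  · exact isCyclic_of_injOn_timeSym injσ fun g ⟨hg, hs⟩ => hσ g hg hs
  · exact isCyclic_of_injOn_O2 injτ fun g ⟨hg, ht⟩ => hτ g hg ht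

/-- For a choreography `u` with symmetry group `G = symmGroup n u`:
every element of `ker ρ` and of `ker σ` has non-time-reversing `τ`-component, every element
of `ker τ` has `ρ`-component in `SO(2)`; consequently `τ` is injective on `ker ρ` and on
`ker σ`, `ρ` is injective on `ker τ`, and when `G` is finite these three kernels are cyclic. -/
theorem statement_1 (n : ℕ) (hn : 3 ≤ n) [NeZero n]
    (u : TimeCircle → Fin n → ℂ) (hu : Continuous u)
    (hsum : ∀ t, ∑ j, u t j = 0)
    (hcoll : ∀ t, Function.Injective (u t))
    (hchor : chorEl n ∈ symmGroup n u) :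
    (∀ g ∈ symmGroup n u, g.1.1 = 1 → g.2.rev = false) ∧
    (∀ g ∈ symmGroup n u, g.1.2 = 1 → g.2.rev = false) ∧
    (∀ g ∈ symmGroup n u, g.2 = 1 → IsRotO g.1.1) ∧
    (∀ g ∈ symmGroup n u, ∀ h ∈ symmGroup n u,
      g.1.1 = 1 → h.1.1 = 1 → g.2 = h.2 → g = h) ∧
    (∀ g ∈ symmGroup n u, ∀ h ∈ symmGroup n u,
      g.1.2 = 1 → h.1.2 = 1 → g.2 = h.2 → g = h) ∧
    (∀ g ∈ symmGroup n u, ∀ h ∈ symmGroup n u,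
      g.2 = 1 → h.2 = 1 → g.1.1 = h.1.1 → g = h) ∧
    (Finite ↥(symmGroup n u) →
      IsCyclic ↥(symmGroup n u ⊓ (rhoHom n).ker) ∧
      IsCyclic ↥(symmGroup n u ⊓ (sigHom n).ker) ∧
      IsCyclic ↥(symmGroup n u ⊓ (tauHom n).ker)) :=
  statement_1_general n hn u hu hcoll hchor
end
end

section
/- Let n ≥ 3 and let u be a choreography in X⁽ⁿ⁾ with symmetry group G ≤ Γ × Ŝ¹. Then ℭₙ is a normal subgroup of G: every α ∈ G satisfies α 𝔠 α⁻¹ ∈ {𝔠, 𝔠⁻¹}. Moreover σ(G) ⊆ Σₙ⁺, the dihedral subgroup of Sₙ generated by σ₁ and s₁. -/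
noncomputable section

open Complex

variable {n : ℕ}

/-!
Conjugating `𝔠` by a symmetry `α` gives a symmetry whose `O(2)`-part is trivial and whose
time part is the rotation by `∓1/n`, the sign depending on whether `α` reverses time. Since
`u` is collision-free, a symmetry is determined by its `O(2)`- and time parts, so
`α 𝔠 α⁻¹ = 𝔠^{±1}`. Projecting to `Sₙ`, `σ(α)` conjugates the `n`-cycle `σ₁` to `σ₁^{±1}`;
after multiplying by `s₁` in the second case it centralises `σ₁`, so it is a power of `σ₁`.
-/

lemma Subgroup.normal_zpowers_subgroupOf_of_conj {G : Type*} [Group G] {K : Subgroup G}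
    {c : G} (hc : c ∈ K) (h : ∀ k ∈ K, k * c * k⁻¹ = c ∨ k * c * k⁻¹ = c⁻¹) :
    ((zpowers c).subgroupOf K).Normal := by
  rw [normal_subgroupOf_iff (zpowers_le_of_mem hc)]
  rintro _ k ⟨i, rfl⟩ hk
  rw [← conj_zpow]
  rcases h k hk with h | h <;> rw [h]
  · exact zpow_mem (mem_zpowers c) i
  · exact zpow_mem (inv_mem (mem_zpowers c)) i

lemma TimeSym.conj_trot (g : TimeSym) (θ : ℝ) :
    g * trot θ * g⁻¹ = if g.rev then (trot θ)⁻¹ else trot θ := by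
  obtain ⟨s, r⟩ := g
  cases r <;> ext <;> simp [trot]

lemma Fixes.eq_of_rho_eq_of_tau_eq {u : TimeCircle → Fin n → ℂ} {t₀ : TimeCircle}
    (hinj : Function.Injective (u t₀))
    {β γ : FullG n} (hβ : Fixes β u) (hγ : Fixes γ u)
    (hρ : β.1.1 = γ.1.1) (hτ : β.2 = γ.2) : β = γ := by
  have hσ : β.1.2⁻¹ = γ.1.2⁻¹ := Equiv.ext fun j ↦ by
    have hj := hβ t₀ j
    rw [hρ, hτ, hγ t₀ j] at hj
    exact (hinj (γ.1.1.injective hj)).symm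
  exact Prod.ext (Prod.ext hρ (inv_injective hσ)) hτ

lemma conj_chorEl_eq [NeZero n] {u : TimeCircle → Fin n → ℂ} {t₀ : TimeCircle}
    (hinj : Function.Injective (u t₀)) (hchor : chorEl n ∈ symmGroup n u)
    {α : FullG n} (hα : α ∈ symmGroup n u) :
    α * chorEl n * α⁻¹ = if α.2.rev then (chorEl n)⁻¹ else chorEl n := by
  have hconj : α * chorEl n * α⁻¹ ∈ symmGroup n u := mul_mem (mul_mem hα hchor) (inv_mem hα)
  have hτ := TimeSym.conj_trot α.2 (-(1 / n))
  split_ifs at hτ ⊢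
  · exact Fixes.eq_of_rho_eq_of_tau_eq hinj hconj (inv_mem hchor) (by simp [chorEl]) hτ
  · exact Fixes.eq_of_rho_eq_of_tau_eq hinj hconj hchor (by simp [chorEl]) hτ

lemma sigma1_pow_val [NeZero n] (j : Fin n) : sigma1 n ^ (j : ℕ) = Equiv.addLeft j := by
  open Fin.CommRing in rw [sigma1, Equiv.nsmul_addLeft, nsmul_one, Fin.cast_val_eq_self]

lemma sOne_inv [NeZero n] : (sOne n)⁻¹ = sOne n := Equiv.ext fun _ ↦ rfl

lemma sOne_mul_sigma1_mul_sOne [NeZero n] : sOne n * sigma1 n * sOne n = (sigma1 n)⁻¹ := by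
  ext j
  simp [sOne, sigma1, Equiv.Perm.inv_def, add_comm]

lemma eq_addLeft_of_commute_sigma1 [NeZero n] {π : Equiv.Perm (Fin n)}
    (h : Commute π (sigma1 n)) : π = Equiv.addLeft (π 0) := by
  ext j
  have hj := congrArg (· 0) (h.pow_right j.val).eq
  simp only [sigma1_pow_val, Equiv.Perm.mul_apply, Equiv.coe_addLeft, add_zero] at hj
  rw [hj, Equiv.coe_addLeft, add_comm]

lemma mem_zpowers_sigma1_of_commute [NeZero n] {π : Equiv.Perm (Fin n)}
    (h : Commute π (sigma1 n)) : π ∈ Subgroup.zpowers (sigma1 n) := by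
  rw [eq_addLeft_of_commute_sigma1 h]
  exact ⟨(π 0).val, (zpow_natCast _ _).trans (sigma1_pow_val _)⟩

lemma mem_closure_of_conj_sigma1 [NeZero n] {π : Equiv.Perm (Fin n)}
    (h : π * sigma1 n * π⁻¹ = sigma1 n ∨ π * sigma1 n * π⁻¹ = (sigma1 n)⁻¹) :
    π ∈ Subgroup.closure {sigma1 n, sOne n} := by
  have hσ₁ : sigma1 n ∈ Subgroup.closure {sigma1 n, sOne n} :=
    Subgroup.subset_closure (Set.mem_insert _ _)
  have hs₁ : sOne n ∈ Subgroup.closure {sigma1 n, sOne n} :=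
    Subgroup.subset_closure (Set.mem_insert_of_mem _ rfl)
  rcases h with h | h
  · exact Subgroup.zpowers_le_of_mem hσ₁ <| mem_zpowers_sigma1_of_commute <|
      mul_inv_eq_iff_eq_mul.mp h
  · -- composing with the reflection `s₁` turns inversion of `σ₁` into commutation
    have hconj : π * sOne n * sigma1 n * (π * sOne n)⁻¹ = sigma1 n :=
      calc π * sOne n * sigma1 n * (π * sOne n)⁻¹
          = π * (sOne n * sigma1 n * sOne n) * π⁻¹ := by simp [sOne_inv, mul_assoc]
        _ = (π * sigma1 n * π⁻¹)⁻¹ := by rw [sOne_mul_sigma1_mul_sOne]; group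
        _ = sigma1 n := by rw [h, inv_inv]
    have hmem := Subgroup.zpowers_le_of_mem hσ₁ <| mem_zpowers_sigma1_of_commute <|
      mul_inv_eq_iff_eq_mul.mp hconj
    simpa using mul_mem hmem (inv_mem hs₁)

theorem statement_3_general (n : ℕ) [NeZero n]
    (u : TimeCircle → Fin n → ℂ)
    (hcoll : ∀ t, Function.Injective (u t))
    (hchor : chorEl n ∈ symmGroup n u) :
    (∀ α ∈ symmGroup n u,
      α * chorEl n * α⁻¹ = chorEl n ∨ α * chorEl n * α⁻¹ = (chorEl n)⁻¹) ∧
    ((Subgroup.zpowers (chorEl n)).subgroupOf (symmGroup n u)).Normal ∧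
    (∀ α ∈ symmGroup n u, α.1.2 ∈ Subgroup.closure {sigma1 n, sOne n}) := by
  have hconj : ∀ α ∈ symmGroup n u,
      α * chorEl n * α⁻¹ = chorEl n ∨ α * chorEl n * α⁻¹ = (chorEl n)⁻¹ := by
    intro α hα
    rw [conj_chorEl_eq (hcoll 0) hchor hα]
    split_ifs <;> simp
  refine ⟨hconj, Subgroup.normal_zpowers_subgroupOf_of_conj hchor hconj, fun α hα ↦ ?_⟩
  exact mem_closure_of_conj_sigma1 <|
    (hconj α hα).imp (congrArg fun g : FullG n ↦ g.1.2) (congrArg fun g : FullG n ↦ g.1.2)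

/-- The choreography group `ℭₙ = ⟨𝔠⟩` is a normal subgroup of the symmetry
group `G` of any choreography: every `α ∈ G` satisfies `α 𝔠 α⁻¹ ∈ {𝔠, 𝔠⁻¹}`; moreover
`σ(G) ⊆ Σₙ⁺ = ⟨σ₁, s₁⟩`. -/
theorem statement_3 (n : ℕ) (hn : 3 ≤ n) [NeZero n]
    (u : TimeCircle → Fin n → ℂ) (hu : Continuous u)
    (hsum : ∀ t, ∑ j, u t j = 0)
    (hcoll : ∀ t, Function.Injective (u t))
    (hchor : chorEl n ∈ symmGroup n u) :
    (∀ α ∈ symmGroup n u,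
      α * chorEl n * α⁻¹ = chorEl n ∨ α * chorEl n * α⁻¹ = (chorEl n)⁻¹) ∧
    ((Subgroup.zpowers (chorEl n)).subgroupOf (symmGroup n u)).Normal ∧
    (∀ α ∈ symmGroup n u, α.1.2 ∈ Subgroup.closure {sigma1 n, sOne n}) :=
  statement_3_general n u hcoll hchor

end
end

section
/- Let n ≥ 3. The groups C(n,k/ℓ) (for any k ≥ 1, ℓ coprime to k) and, for n odd, C'(n,2) and D'(n,1) all satisfy the rotating circle condition, while the groups D(n,k/ℓ) and, for n odd, D'(n,2) do not satisfy it. -/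
noncomputable section

open Complex

variable {n : ℕ}

/-- The element `(κ, s₁, 0̄)`: reflection of the plane, the involution `s₁`, time reversal. -/
def reflEl (n : ℕ) [NeZero n] : FullG n := ((Complex.conjLIE, sOne n), TimeSym.tref 0)

/-- The generator `g₀ = (R_{2πℓ/k}, e, 1/k)` of the extra symmetry of `C(n,k/ℓ)`. -/
def g0El (n k ℓ : ℕ) : FullG n := ((rotO ((ℓ : ℝ) / k), 1), TimeSym.trot (1 / k))

/-- The symmetry group `C(n, k/ℓ)`, generated by `𝔠` and `g₀`. -/
def Cgrp (n : ℕ) [NeZero n] (k ℓ : ℕ) : Subgroup (FullG n) :=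
  Subgroup.closure {chorEl n, g0El n k ℓ}

/-- The symmetry group `D(n, k/ℓ)`, generated by `𝔠`, `g₀` and `(κ, s₁, 0̄)`. -/
def Dgrp (n : ℕ) [NeZero n] (k ℓ : ℕ) : Subgroup (FullG n) :=
  Subgroup.closure {chorEl n, g0El n k ℓ, reflEl n}

open Fin.NatCast in
/-- For odd `n`, the unique square root `σ₂` of `σ₁` in `Σₙ`. -/
def sigma2 (n : ℕ) [NeZero n] : Equiv.Perm (Fin n) :=
  Equiv.addLeft (((n + 1) / 2 : ℕ) : Fin n)

/-- The generator `(κ, σ₂, -1/(2n))` of the exceptional group `C'(n,2)`. -/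
def cpEl (n : ℕ) [NeZero n] : FullG n :=
  ((Complex.conjLIE, sigma2 n), TimeSym.trot (-(1 / (2 * n))))

/-- The exceptional symmetry group `C'(n,2)` (for odd `n`), cyclic generated by `(κ, σ₂, -1/(2n))`. -/
def Cpgrp (n : ℕ) [NeZero n] : Subgroup (FullG n) := Subgroup.zpowers (cpEl n)

/-- The element `(R_π, s₁, 0̄)`. -/
def rpiEl (n : ℕ) [NeZero n] : FullG n := ((rotO (1 / 2), sOne n), TimeSym.tref 0)

/-- The exceptional symmetry group `D'(n,1)` (for odd `n`), generated by `𝔠` and `(R_π, s₁, 0̄)`. -/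
def Dp1grp (n : ℕ) [NeZero n] : Subgroup (FullG n) :=
  Subgroup.closure {chorEl n, rpiEl n}

/-- The exceptional symmetry group `D'(n,2)` (for odd `n`), generated by `(κ, σ₂, -1/(2n))`
and `(R_π, s₁, 0̄)`. -/
def Dp2grp (n : ℕ) [NeZero n] : Subgroup (FullG n) :=
  Subgroup.closure {cpEl n, rpiEl n}

/-- The symmetry group `D(n, ∞/ℓ)` of the speed-`ℓ` circular choreography, generated by `𝔠`,
`(κ, s₁, 0̄)` and all elements `(R_{2πℓθ}, e, θ)` for `θ ∈ S¹`. -/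
def circGrp (n : ℕ) [NeZero n] (ℓ : ℕ) : Subgroup (FullG n) :=
  Subgroup.closure
    ({chorEl n, reflEl n} ∪ {g | ∃ θ : ℝ, g = ((rotO ((ℓ : ℝ) * θ), 1), TimeSym.trot θ)})

/-- `H` is conjugate to `K` in `Γ × Ŝ¹`. -/
def IsConjTo {n : ℕ} (H K : Subgroup (FullG n)) : Prop :=
  ∃ γ : FullG n, Subgroup.map (MulAut.conj γ).toMonoidHom H = K

/-- `H ≺ K` : `H` is conjugate in `Γ × Ŝ¹` to a subgroup of `K`. -/
def SubConjTo {n : ℕ} (H K : Subgroup (FullG n)) : Prop :=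
  ∃ γ : FullG n, Subgroup.map (MulAut.conj γ).toMonoidHom H ≤ K

/-- The rotating circle condition of Ferrario and Terracini for a symmetry group
`G ≤ Γ × Ŝ¹`: for every `t`, (i) `ρ(G_t) ⊆ SO(2)` and (ii) `ρ(G_{t,i})` is trivial for at
least `n - 1` indices `i`, where `G_t` is the isotropy subgroup of `t` and `G_{t,i}` the
subgroup of `G_t` fixing the index `i`. -/
def RotatingCircleCondition (n : ℕ) (G : Subgroup (FullG n)) : Prop :=
  ∀ t : TimeCircle,
    (∀ g ∈ G, g.2.act t = t → IsRotO g.1.1) ∧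
    (∃ J : Finset (Fin n), n - 1 ≤ J.card ∧
      ∀ i ∈ J, ∀ g ∈ G, g.2.act t = t → g.1.2 i = i → g.1.1 = 1)

/-!
Every element of `C(n,k/ℓ)` is a word `𝔠^a g₀^b`; it fixes an index only if `n ∣ a`, and then
it fixes a time only if `b/k ∈ ℤ`, which makes its planar part `R_{2πℓb/k}` trivial. An element
`(κ, σ₂, -1/(2n))^m` of `C'(n,2)` fixes a time only if `m` is even, so its planar part `κ^m`
is trivial. The elements of `D'(n,1)` are the `𝔠^a`, with trivial planar part, and the
`𝔠^a (R_π, s₁, 0̄)`: these fix the time `t` only if `-a/n ≡ 2t`, which fixes `a` mod `n`, and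
then the index they fix is `a/2`, unique since `n` is odd. On the other hand `(κ, s₁, 0̄)`
fixes the time `0` and `(κ, σ₂, -1/(2n)) (R_π, s₁, 0̄)` fixes the time `-1/(4n)`, while their
planar parts are reflections.
-/

open Fin.CommRing

section GroupWords

variable {G : Type*} [Group G]

theorem zpow_apply_eq_apply_mul {f : ℝ → G} (h0 : f 0 = 1)
    (hadd : ∀ a b, f (a + b) = f a * f b) (x : ℝ) (m : ℤ) : f x ^ m = f (m * x) := by
  let φ : Multiplicative ℝ →* G :=
    { toFun := fun y => f y.toAdd, map_one' := h0, map_mul' := fun a b => hadd a.toAdd b.toAdd }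
  simpa [φ] using (map_zpow φ (Multiplicative.ofAdd x) m).symm

theorem Subgroup.exists_zpow_mul_zpow_of_mem_closure_pair {a b : G} (hab : Commute a b) {g : G}
    (hg : g ∈ Subgroup.closure {a, b}) : ∃ i j : ℤ, g = a ^ i * b ^ j := by
  induction hg using Subgroup.closure_induction with
  | mem x hx =>
    rcases hx with rfl | rfl
    · exact ⟨1, 0, by simp⟩
    · exact ⟨0, 1, by simp⟩
  | one => exact ⟨0, 0, by simp⟩
  | mul x y _ _ hx hy =>
    obtain ⟨i, j, rfl⟩ := hx
    obtain ⟨i', j', rfl⟩ := hy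
    refine ⟨i + i', j + j', ?_⟩
    rw [zpow_add, zpow_add, (hab.symm.zpow_zpow j i').mul_mul_mul_comm]
  | inv x _ hx =>
    obtain ⟨i, j, rfl⟩ := hx
    refine ⟨-i, -j, ?_⟩
    rw [mul_inv_rev, ← zpow_neg, ← zpow_neg, (hab.zpow_zpow (-i) (-j)).eq]

theorem Subgroup.exists_zpow_or_zpow_mul_of_mem_closure_pair {a r : G} (hr : r * r = 1)
    (hra : r * a = a⁻¹ * r) {g : G} (hg : g ∈ Subgroup.closure {a, r}) :
    ∃ i : ℤ, g = a ^ i ∨ g = a ^ i * r := by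
  have hr_inv : r⁻¹ = r := inv_eq_of_mul_eq_one_right hr
  have hra_zpow (i : ℤ) : r * a ^ i = a ^ (-i) * r := by
    rw [zpow_neg, ← inv_zpow]
    exact SemiconjBy.zpow_right hra i
  induction hg using Subgroup.closure_induction with
  | mem x hx =>
    rcases hx with rfl | rfl
    · exact ⟨1, Or.inl (zpow_one x).symm⟩
    · exact ⟨0, Or.inr (by rw [zpow_zero, one_mul])⟩
  | one => exact ⟨0, Or.inl (zpow_zero a).symm⟩
  | mul x y _ _ hx hy =>
    obtain ⟨i, rfl | rfl⟩ := hx <;> obtain ⟨j, rfl | rfl⟩ := hy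
    · exact ⟨i + j, Or.inl (zpow_add a i j).symm⟩
    · exact ⟨i + j, Or.inr (by rw [← mul_assoc, ← zpow_add])⟩
    · exact ⟨i - j, Or.inr (by rw [mul_assoc, hra_zpow, ← mul_assoc, ← zpow_add, sub_eq_add_neg])⟩
    · refine ⟨i - j, Or.inl ?_⟩
      rw [mul_assoc, ← mul_assoc r, hra_zpow, mul_assoc, hr, mul_one, ← zpow_add, sub_eq_add_neg]
  | inv x _ hx =>
    obtain ⟨i, rfl | rfl⟩ := hx
    · exact ⟨-i, Or.inl (zpow_neg a i).symm⟩
    · exact ⟨i, Or.inr (by rw [mul_inv_rev, hr_inv, ← zpow_neg, hra_zpow, neg_neg])⟩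

end GroupWords

theorem Fin.add_self_injective_of_odd [NeZero n] (hn : Odd n) :
    Function.Injective fun x : Fin n => x + x := by
  intro x y h
  obtain ⟨m, rfl⟩ := hn
  have h_half : ((m + 1 : ℕ) : Fin (2 * m + 1)) * 2 = 1 := by
    have := Fin.natCast_self (2 * m + 1)
    push_cast at this ⊢
    linear_combination this
  linear_combination ((m + 1 : ℕ) : Fin (2 * m + 1)) * h - (x - y) * h_half

theorem timeCircle_coe_eq_zero_iff (x : ℝ) : (x : TimeCircle) = 0 ↔ ∃ m : ℤ, (m : ℝ) = x := by
  simp only [AddCircle.coe_eq_zero_iff, zsmul_one]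

theorem timeCircle_coe_intCast_div_eq_zero_iff [NeZero n] (a : ℤ) :
    (((a / n : ℝ)) : TimeCircle) = 0 ↔ (a : Fin n) = 0 := by
  have hn : (n : ℝ) ≠ 0 := Nat.cast_ne_zero.mpr (NeZero.ne n)
  rw [timeCircle_coe_eq_zero_iff, CharP.intCast_eq_zero_iff (Fin n) n]
  refine exists_congr fun m => ?_
  rw [eq_div_iff hn, eq_comm, mul_comm]
  exact_mod_cast Iff.rfl

namespace TimeSym

theorem trot_zero : trot 0 = 1 := by
  ext <;> simp [trot]

theorem trot_add (a b : ℝ) : trot (a + b) = trot a * trot b := by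
  ext <;> simp [trot]

theorem trot_zpow (x : ℝ) (m : ℤ) : trot x ^ m = trot (m * x) :=
  zpow_apply_eq_apply_mul trot_zero trot_add x m

theorem trot_inv (x : ℝ) : (trot x)⁻¹ = trot (-x) := by
  ext <;> simp [trot]

theorem trot_mul_tref (x y : ℝ) : trot x * tref y = tref (x + y) := by
  ext <;> simp [trot, tref]

theorem tref_mul_trot (x y : ℝ) : tref x * trot y = tref (x - y) := by
  ext <;> simp [trot, tref, sub_eq_add_neg]

theorem tref_mul_tref (x y : ℝ) : tref x * tref y = trot (x - y) := by
  ext <;> simp [trot, tref, sub_eq_add_neg]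

theorem act_trot_eq_self_iff (x : ℝ) (t : TimeCircle) :
    (trot x).act t = t ↔ (x : TimeCircle) = 0 := by
  simp [act, trot]

theorem act_tref_eq_self_iff (x : ℝ) (t : TimeCircle) :
    (tref x).act t = t ↔ (x : TimeCircle) = t + t := by
  simp only [act, tref, if_true, add_neg_eq_iff_eq_add]

end TimeSym

open ComplexConjugate

theorem rotO_zero : rotO 0 = 1 := by
  rw [rotO, mul_zero, Circle.exp_zero, map_one]

theorem rotO_add (a b : ℝ) : rotO (a + b) = rotO a * rotO b := by
  rw [rotO, rotO, rotO, ← map_mul, ← Circle.exp_add, mul_add]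

theorem rotO_zpow (x : ℝ) (m : ℤ) : rotO x ^ m = rotO (m * x) :=
  zpow_apply_eq_apply_mul rotO_zero rotO_add x m

theorem rotO_intCast (m : ℤ) : rotO m = 1 := by
  rw [rotO, mul_comm, Circle.exp_int_mul_two_pi, map_one]

theorem isRotO_rotation (c : Circle) : IsRotO (rotation c) := fun z => by
  simp only [rotation_apply, mul_one]

theorem isRotO_one : IsRotO 1 := by
  simpa using isRotO_rotation 1

theorem not_isRotO_conjLIE_mul_rotation (c : Circle) : ¬ IsRotO (conjLIE * rotation c) := by
  intro h
  have hI : conj ((c : ℂ) * I) = conj ((c : ℂ) * 1) * I := h I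
  have hc : conj (c : ℂ) ≠ 0 := (map_ne_zero _).mpr (Circle.coe_ne_zero c)
  simp only [map_mul, conj_I, mul_one] at hI
  have : I = -I := mul_left_cancel₀ hc (by linear_combination -hI)
  norm_num [Complex.ext_iff] at this

theorem not_isRotO_conjLIE : ¬ IsRotO conjLIE := by
  simpa using not_isRotO_conjLIE_mul_rotation 1

theorem conjLIE_mul_self : conjLIE * conjLIE = 1 :=
  LinearIsometryEquiv.ext fun z => conj_conj z

open TimeSym in
theorem g0El_zpow (k ℓ : ℕ) (b : ℤ) :
    g0El n k ℓ ^ b = ((rotO (ℓ * (b / k)), 1), trot (b / k)) := by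
  rw [g0El, Prod.pow_mk, Prod.pow_mk, one_zpow, rotO_zpow, trot_zpow]
  congr 3 <;> ring

section Generators

variable [NeZero n]

open TimeSym

theorem chorEl_zpow (a : ℤ) :
    chorEl n ^ a = ((1, Equiv.addLeft (a : Fin n)), trot (-(a / n))) := by
  rw [chorEl, sigma1, Prod.pow_mk, Prod.pow_mk, one_zpow, Equiv.zsmul_addLeft, zsmul_one,
    trot_zpow]
  congr 3
  ring

theorem cpEl_zpow (m : ℤ) :
    cpEl n ^ m = ((conjLIE ^ m, sigma2 n ^ m), trot (-(m / (2 * n)))) := by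
  rw [cpEl, Prod.pow_mk, Prod.pow_mk, trot_zpow]
  congr 2
  ring

theorem commute_chorEl_g0El (k ℓ : ℕ) : Commute (chorEl n) (g0El n k ℓ) := by
  simp only [Commute, SemiconjBy, chorEl, g0El, Prod.mk_mul_mk, one_mul, mul_one, ← trot_add,
    add_comm]

theorem rpiEl_mul_self : rpiEl n * rpiEl n = 1 := by
  have hs : sOne n * sOne n = 1 := Equiv.ext fun j => neg_neg j
  have hR : rotO (1 / 2) * rotO (1 / 2) = 1 := by
    rw [← rotO_add, add_halves]
    exact_mod_cast rotO_intCast 1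
  simp only [rpiEl, Prod.mk_mul_mk, hR, hs, tref_mul_tref, sub_self, trot_zero]
  rfl

theorem rpiEl_mul_chorEl : rpiEl n * chorEl n = (chorEl n)⁻¹ * rpiEl n := by
  have hs : sOne n * sigma1 n = (sigma1 n)⁻¹ * sOne n := Equiv.ext fun j => by
    simp only [sOne, sigma1, Equiv.Perm.mul_apply, Equiv.coe_addLeft, Equiv.neg_apply,
      neg_add_rev, Equiv.neg_addLeft]
    ring
  simp only [rpiEl, chorEl, Prod.inv_mk, Prod.mk_mul_mk, one_mul, mul_one, inv_one, hs,
    tref_mul_trot, trot_inv, trot_mul_tref, zero_sub, add_zero]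

theorem exists_eq_of_mem_Cgrp {k ℓ : ℕ} {g : FullG n} (hg : g ∈ Cgrp n k ℓ) :
    ∃ a b : ℤ, g = ((rotO (ℓ * (b / k)), Equiv.addLeft (a : Fin n)), trot (-(a / n) + b / k)) := by
  obtain ⟨a, b, rfl⟩ :=
    Subgroup.exists_zpow_mul_zpow_of_mem_closure_pair (commute_chorEl_g0El k ℓ) hg
  refine ⟨a, b, ?_⟩
  rw [chorEl_zpow, g0El_zpow, Prod.mk_mul_mk, Prod.mk_mul_mk, one_mul, mul_one, trot_add]

theorem exists_eq_of_mem_Dp1grp {g : FullG n} (hg : g ∈ Dp1grp n) :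
    ∃ a : ℤ, g = ((1, Equiv.addLeft (a : Fin n)), trot (-(a / n))) ∨
      g = ((rotO (1 / 2), Equiv.subLeft (a : Fin n)), tref (-(a / n))) := by
  obtain ⟨a, rfl | rfl⟩ :=
    Subgroup.exists_zpow_or_zpow_mul_of_mem_closure_pair rpiEl_mul_self rpiEl_mul_chorEl hg
  · exact ⟨a, Or.inl (chorEl_zpow a)⟩
  · refine ⟨a, Or.inr ?_⟩
    rw [chorEl_zpow, rpiEl, Prod.mk_mul_mk, Prod.mk_mul_mk, one_mul, trot_mul_tref, add_zero]
    congr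
    ext j
    simp [sOne, sub_eq_add_neg]

end Generators

theorem RotatingCircleCondition.of_subsingleton {G : Subgroup (FullG n)}
    (hrot : ∀ t, ∀ g ∈ G, g.2.act t = t → IsRotO g.1.1)
    (hsub : ∀ t, {i : Fin n | ∃ g ∈ G, g.2.act t = t ∧ g.1.2 i = i ∧ g.1.1 ≠ 1}.Subsingleton) :
    RotatingCircleCondition n G := by
  intro t
  refine ⟨hrot t, ?_⟩
  set S := {i : Fin n | ∃ g ∈ G, g.2.act t = t ∧ g.1.2 i = i ∧ g.1.1 ≠ 1}
  suffices ∃ J : Finset (Fin n), n - 1 ≤ J.card ∧ ∀ i ∈ J, i ∉ S by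
    obtain ⟨J, hcard, hJ⟩ := this
    exact ⟨J, hcard, fun i hi g hg ht hfix => by_contra fun hne => hJ i hi ⟨g, hg, ht, hfix, hne⟩⟩
  rcases (show S.Subsingleton from hsub t).eq_empty_or_singleton with hS | ⟨i₀, hS⟩
  · exact ⟨Finset.univ, by simp, fun i _ => hS ▸ Set.notMem_empty i⟩
  · refine ⟨Finset.univ.erase i₀, by simp, fun i hi => ?_⟩
    rw [hS, Set.mem_singleton_iff]
    exact Finset.ne_of_mem_erase hi

section Groups

variable [NeZero n]

open TimeSym

theorem rotatingCircleCondition_Cgrp (k ℓ : ℕ) : RotatingCircleCondition n (Cgrp n k ℓ) := by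
  have rho_eq_one {g t i} (hg : g ∈ Cgrp n k ℓ) (ht : g.2.act t = t) (hi : g.1.2 i = i) :
      g.1.1 = 1 := by
    obtain ⟨a, b, rfl⟩ := exists_eq_of_mem_Cgrp hg
    have ha : ((a / n : ℝ) : TimeCircle) = 0 :=
      (timeCircle_coe_intCast_div_eq_zero_iff a).mpr (by simpa using hi)
    rw [act_trot_eq_self_iff, AddCircle.coe_add, AddCircle.coe_neg, ha, neg_zero, zero_add] at ht
    obtain ⟨m, hm⟩ := (timeCircle_coe_eq_zero_iff _).mp ht
    change rotO _ = 1
    rw [← hm]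
    exact_mod_cast rotO_intCast (ℓ * m)
  refine .of_subsingleton (fun t g hg _ => ?_)
    fun t i ⟨g, hg, ht, hi, hne⟩ => (hne (rho_eq_one hg ht hi)).elim
  obtain ⟨a, b, rfl⟩ := exists_eq_of_mem_Cgrp hg
  exact isRotO_rotation _

theorem rotatingCircleCondition_Cpgrp : RotatingCircleCondition n (Cpgrp n) := by
  have rho_eq_one {g t} (hg : g ∈ Cpgrp n) (ht : g.2.act t = t) : g.1.1 = 1 := by
    obtain ⟨m, rfl⟩ := Subgroup.mem_zpowers_iff.mp hg
    rw [cpEl_zpow, act_trot_eq_self_iff, timeCircle_coe_eq_zero_iff] at ht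
    obtain ⟨z, hz⟩ := ht
    have hm : m = 2 * (-(n * z)) := by
      have hn : (n : ℝ) ≠ 0 := Nat.cast_ne_zero.mpr (NeZero.ne n)
      have : (m : ℝ) = 2 * (-(n * z)) := by
        rw [hz]
        field_simp
      exact_mod_cast this
    rw [cpEl_zpow, hm, zpow_mul, zpow_two, conjLIE_mul_self, one_zpow]
  exact .of_subsingleton (fun t g hg ht => rho_eq_one hg ht ▸ isRotO_one)
    fun t i ⟨g, hg, ht, _, hne⟩ => (hne (rho_eq_one hg ht)).elim

theorem rotatingCircleCondition_Dp1grp (hn : Odd n) : RotatingCircleCondition n (Dp1grp n) := by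
  refine .of_subsingleton (fun t g hg _ => ?_) fun t => ?_
  · obtain ⟨a, rfl | rfl⟩ := exists_eq_of_mem_Dp1grp hg
    exacts [isRotO_one, isRotO_rotation _]
  have exists_double {g i} (hg : g ∈ Dp1grp n) (ht : g.2.act t = t) (hi : g.1.2 i = i)
      (hne : g.1.1 ≠ 1) : ∃ a : ℤ, ((-(a / n) : ℝ) : TimeCircle) = t + t ∧ (a : Fin n) = i + i := by
    obtain ⟨a, rfl | rfl⟩ := exists_eq_of_mem_Dp1grp hg
    · exact (hne rfl).elim
    · refine ⟨a, (act_tref_eq_self_iff _ t).mp ht, ?_⟩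
      exact sub_eq_iff_eq_add.mp hi
  rintro i ⟨g, hg, ht, hi, hne⟩ i' ⟨g', hg', ht', hi', hne'⟩
  obtain ⟨a, ha_t, ha_i⟩ := exists_double hg ht hi hne
  obtain ⟨a', ha'_t, ha'_i⟩ := exists_double hg' ht' hi' hne'
  have hdiff : ((((a' - a : ℤ) : ℝ) / n : ℝ) : TimeCircle) =
      ((-(a / n) : ℝ) : TimeCircle) - ((-(a' / n) : ℝ) : TimeCircle) := by
    rw [← AddCircle.coe_sub]
    congr 1
    push_cast
    ring
  rw [ha_t, ha'_t, sub_self] at hdiff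
  have ha : (a' : Fin n) = a := by
    simpa [sub_eq_zero] using (timeCircle_coe_intCast_div_eq_zero_iff _).mp hdiff
  exact Fin.add_self_injective_of_odd hn (show i + i = i' + i' by rw [← ha_i, ← ha'_i, ha])

theorem not_rotatingCircleCondition_Dgrp (k ℓ : ℕ) : ¬ RotatingCircleCondition n (Dgrp n k ℓ) :=
  fun h => not_isRotO_conjLIE <| (h 0).1 (reflEl n) (Subgroup.subset_closure (by simp)) <| by
    simp [reflEl, act_tref_eq_self_iff]

theorem not_rotatingCircleCondition_Dp2grp : ¬ RotatingCircleCondition n (Dp2grp n) := by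
  intro h
  have hmem : cpEl n * rpiEl n ∈ Dp2grp n :=
    mul_mem (Subgroup.subset_closure (by simp)) (Subgroup.subset_closure (by simp))
  have hfix : (cpEl n * rpiEl n).2.act ((-(1 / (4 * n)) : ℝ) : TimeCircle) =
      ((-(1 / (4 * n)) : ℝ) : TimeCircle) := by
    rw [cpEl, rpiEl, Prod.snd_mul, trot_mul_tref, add_zero, act_tref_eq_self_iff,
      ← AddCircle.coe_add]
    congr 1
    ring
  exact not_isRotO_conjLIE_mul_rotation _ ((h _).1 _ hmem hfix)

end Groups

theorem statement_11_general (n : ℕ) [NeZero n] :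
    (∀ k ℓ : ℕ, 1 ≤ k → Nat.Coprime ℓ k → RotatingCircleCondition n (Cgrp n k ℓ)) ∧
    (Odd n → RotatingCircleCondition n (Cpgrp n)) ∧
    (Odd n → RotatingCircleCondition n (Dp1grp n)) ∧
    (∀ k ℓ : ℕ, 1 ≤ k → Nat.Coprime ℓ k → ¬ RotatingCircleCondition n (Dgrp n k ℓ)) ∧
    (Odd n → ¬ RotatingCircleCondition n (Dp2grp n)) :=
  ⟨fun k ℓ _ _ => rotatingCircleCondition_Cgrp k ℓ, fun _ => rotatingCircleCondition_Cpgrp,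
    rotatingCircleCondition_Dp1grp, fun k ℓ _ _ => not_rotatingCircleCondition_Dgrp k ℓ,
    fun _ => not_rotatingCircleCondition_Dp2grp⟩

/-- The groups `C(n,k/ℓ)` and, for odd `n`, `C'(n,2)` and `D'(n,1)` satisfy
the rotating circle condition, while `D(n,k/ℓ)` and, for odd `n`, `D'(n,2)` do not. -/
theorem statement_11 (n : ℕ) (hn : 3 ≤ n) [NeZero n] :
    (∀ k ℓ : ℕ, 1 ≤ k → Nat.Coprime ℓ k → RotatingCircleCondition n (Cgrp n k ℓ)) ∧
    (Odd n → RotatingCircleCondition n (Cpgrp n)) ∧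
    (Odd n → RotatingCircleCondition n (Dp1grp n)) ∧
    (∀ k ℓ : ℕ, 1 ≤ k → Nat.Coprime ℓ k → ¬ RotatingCircleCondition n (Dgrp n k ℓ)) ∧
    (Odd n → ¬ RotatingCircleCondition n (Dp2grp n)) :=
  statement_11_general n
end
end
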